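/- Let z* ∈ Λ(X⊕Y_k) with ‖z*‖_Σ = 1, and suppose z* admits a representation z* = x* + Σ_k α_k y_k* where ‖x* + y_k*‖_{X⊕Y_k} ≤ 1, 0 ≤ α_k ≤ 1, Σ α_k² ≤ 1, with ‖x*‖_X < 1. Then there exists a representation of z* of this form with Σ_k α_k² = 1 and ‖x* + y_k*‖_{X⊕Y_k} = 1 whenever α_k > 0. -/

import Mathlib

/-- `N` is a norm on `X × Y` which coincides with the given norms on `X` and on `Y`
and is monotone in the sense that `‖x + y‖_{X⊕Y} ≥ ‖x‖_X`. -/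
def IsCompatibleNorm (X Y : Type*) [NormedAddCommGroup X] [NormedSpace ℝ X]
    [NormedAddCommGroup Y] [NormedSpace ℝ Y] (N : X × Y → ℝ) : Prop :=
  (∀ u v : X × Y, N (u + v) ≤ N u + N v) ∧
  (∀ (c : ℝ) (u : X × Y), N (c • u) = |c| * N u) ∧
  (∀ u : X × Y, N u = 0 → u = 0) ∧
  (∀ x : X, N (x, 0) = ‖x‖) ∧
  (∀ y : Y, N ((0 : X), y) = ‖y‖) ∧
  (∀ (x : X) (y : Y), ‖x‖ ≤ N (x, y))

/-- The norm `‖·‖_Σ` of the generalized `ℓ²`-sum `Σ(X ⊕ Y_k)`: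
`‖x + Σ_k y_k‖_Σ = sup {|z*(x + Σ y_k)| : z* ∈ Λ(X ⊕ Y_k)}`, where
`Λ(X ⊕ Y_k)` consists of the functionals `x* + Σ_k α_k y_k*` with
`‖x* + y_k*‖_{X⊕Y_k} ≤ 1`, `0 ≤ α_k ≤ 1` and `Σ_k α_k² ≤ 1`. -/
noncomputable def sigmaNorm {X : Type*} [NormedAddCommGroup X] [NormedSpace ℝ X]
    {Y : ℕ → Type*} [∀ k, NormedAddCommGroup (Y k)] [∀ k, NormedSpace ℝ (Y k)]
    (N : ∀ k, X × Y k → ℝ) (x : X) (y : ∀ k, Y k) : ℝ :=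
  sSup {r : ℝ | ∃ (xs : X →L[ℝ] ℝ) (ys : ∀ k, Y k →L[ℝ] ℝ) (α : ℕ → ℝ),
    (∀ (k : ℕ) (a : X) (b : Y k), |xs a + ys k b| ≤ N k (a, b)) ∧
    (∀ k, 0 ≤ α k) ∧ (∀ k, α k ≤ 1) ∧
    (Summable fun k => (α k) ^ 2) ∧ (∑' k, (α k) ^ 2) ≤ 1 ∧
    r = |xs x + ∑' k, α k * ys k (y k)|}

/-- The dual norm `‖x* + Σ_k y_k*‖_Σ` of a functional on `Σ(X ⊕ Y_k)`, i.e. its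
supremum over the unit ball of `(Σ(X ⊕ Y_k), ‖·‖_Σ)`. -/
noncomputable def sigmaOpNorm {X : Type*} [NormedAddCommGroup X] [NormedSpace ℝ X]
    {Y : ℕ → Type*} [∀ k, NormedAddCommGroup (Y k)] [∀ k, NormedSpace ℝ (Y k)]
    (N : ∀ k, X × Y k → ℝ) (xs : X →L[ℝ] ℝ) (ys : ∀ k, Y k →L[ℝ] ℝ) : ℝ :=
  sSup {r : ℝ | ∃ (x : X) (y : ∀ k, Y k),
    (Summable fun k => ‖y k‖ ^ 2) ∧ sigmaNorm N x y ≤ 1 ∧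
    r = |xs x + ∑' k, ys k (y k)|}

/-- The dual norm `‖x* + y*‖_{X⊕Y}` of a pair of functionals with respect to the
norm `N` on `X × Y`. -/
noncomputable def pairDualNorm {X Y : Type*} [NormedAddCommGroup X] [NormedSpace ℝ X]
    [NormedAddCommGroup Y] [NormedSpace ℝ Y]
    (N : X × Y → ℝ) (xs : X →L[ℝ] ℝ) (ys : Y →L[ℝ] ℝ) : ℝ :=
  sSup {r : ℝ | ∃ u : X × Y, N u ≤ 1 ∧ r = |xs u.1 + ys u.2|}

section NBasics
variable {X Y : Type*} [NormedAddCommGroup X] [NormedSpace ℝ X]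
  [NormedAddCommGroup Y] [NormedSpace ℝ Y]

lemma N_zero' {N : X × Y → ℝ} (h : IsCompatibleNorm X Y N) : N 0 = 0 := by
  have := h.2.1 0 0
  simpa using this

lemma N_nonneg' {N : X × Y → ℝ} (h : IsCompatibleNorm X Y N) (u : X × Y) : 0 ≤ N u := by
  have h1 := h.1 u (-u)
  have h2 : N (-u) = N u := by simpa using h.2.1 (-1) u
  have h3 : N (u + -u) = 0 := by simpa using N_zero' h
  nlinarith

lemma pairDual_le_one' {N : X × Y → ℝ} {xs : X →L[ℝ] ℝ} {w : Y →L[ℝ] ℝ}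
    (hw : ∀ a b, |xs a + w b| ≤ N (a, b)) : pairDualNorm N xs w ≤ 1 := by
  refine Real.sSup_le ?_ zero_le_one
  rintro r ⟨u, hu, rfl⟩
  exact le_trans (hw u.1 u.2) hu

lemma pair_pointwise' {N : X × Y → ℝ} (h : IsCompatibleNorm X Y N)
    {xs : X →L[ℝ] ℝ} {w : Y →L[ℝ] ℝ}
    (hw : ∀ a b, |xs a + w b| ≤ N (a, b)) (a : X) (b : Y) :
    |xs a + w b| ≤ pairDualNorm N xs w * N (a, b) := by
  have bdd : BddAbove {r : ℝ | ∃ u : X × Y, N u ≤ 1 ∧ r = |xs u.1 + w u.2|} := by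
    refine ⟨1, ?_⟩
    rintro r ⟨u, hu, rfl⟩
    exact le_trans (hw u.1 u.2) hu
  by_cases hm : N (a, b) = 0
  · have h0 : ((a, b) : X × Y) = 0 := h.2.2.1 _ hm
    have ha : a = 0 := congrArg Prod.fst h0
    have hb : b = 0 := congrArg Prod.snd h0
    subst ha; subst hb
    simp only [map_zero, add_zero, abs_zero]
    rw [hm, mul_zero]
  · have hmpos : 0 < N (a, b) := lt_of_le_of_ne (N_nonneg' h _) (Ne.symm hm)
    set m := N (a, b) with hmdef
    have hmem : |xs ((m⁻¹ : ℝ) • a) + w ((m⁻¹ : ℝ) • b)| ≤ pairDualNorm N xs w := by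
      apply le_csSup bdd
      refine ⟨(m⁻¹ : ℝ) • (a, b), ?_, rfl⟩
      rw [h.2.1]
      rw [abs_of_nonneg (inv_nonneg.2 hmpos.le)]
      rw [inv_mul_cancel₀ hmpos.ne']
    have hval : |xs ((m⁻¹ : ℝ) • a) + w ((m⁻¹ : ℝ) • b)| = m⁻¹ * |xs a + w b| := by
      rw [map_smul, map_smul, smul_eq_mul, smul_eq_mul, ← mul_add, abs_mul,
        abs_of_nonneg (inv_nonneg.2 hmpos.le)]
    rw [hval] at hmem
    calc |xs a + w b| = m * (m⁻¹ * |xs a + w b|) := by field_simp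
      _ ≤ m * pairDualNorm N xs w := by
          exact mul_le_mul_of_nonneg_left hmem hmpos.le
      _ = pairDualNorm N xs w * m := mul_comm _ _

end NBasics

lemma tsum_cs' {f g : ℕ → ℝ} (hf0 : ∀ k, 0 ≤ f k) (hg0 : ∀ k, 0 ≤ g k)
    (hf : Summable fun k => f k ^ 2) (hg : Summable fun k => g k ^ 2) :
    Summable (fun k => f k * g k) ∧
      ∑' k, f k * g k ≤ Real.sqrt (∑' k, f k ^ 2) * Real.sqrt (∑' k, g k ^ 2) := by
  have hfg : Summable fun k => f k * g k := by
    refine Summable.of_nonneg_of_le (fun k => mul_nonneg (hf0 k) (hg0 k))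
      (fun k => ?_) ((hf.add hg).div_const 2)
    nlinarith [sq_nonneg (f k - g k)]
  refine ⟨hfg, Summable.tsum_le_of_sum_le hfg fun s => ?_⟩
  calc ∑ k ∈ s, f k * g k
      ≤ Real.sqrt (∑ k ∈ s, f k ^ 2) * Real.sqrt (∑ k ∈ s, g k ^ 2) :=
        Real.sum_mul_le_sqrt_mul_sqrt s f g
    _ ≤ Real.sqrt (∑' k, f k ^ 2) * Real.sqrt (∑' k, g k ^ 2) := by
        apply mul_le_mul (Real.sqrt_le_sqrt ?_) (Real.sqrt_le_sqrt ?_)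
          (Real.sqrt_nonneg _) (Real.sqrt_nonneg _)
        · exact Summable.sum_le_tsum s (fun k _ => sq_nonneg _) hf
        · exact Summable.sum_le_tsum s (fun k _ => sq_nonneg _) hg

section Main
variable {X : Type*} [NormedAddCommGroup X] [NormedSpace ℝ X]
  {Y : ℕ → Type*} [∀ k, NormedAddCommGroup (Y k)] [∀ k, NormedSpace ℝ (Y k)]
  (N : ∀ k, X × Y k → ℝ)

lemma sigmaNorm_bddAbove (hN : ∀ k, IsCompatibleNorm X (Y k) (N k))
    (x : X) (y : ∀ k, Y k) (hy : Summable fun k => ‖y k‖ ^ 2) :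
    BddAbove {r : ℝ | ∃ (xs : X →L[ℝ] ℝ) (ys : ∀ k, Y k →L[ℝ] ℝ) (α : ℕ → ℝ),
      (∀ (k : ℕ) (a : X) (b : Y k), |xs a + ys k b| ≤ N k (a, b)) ∧
      (∀ k, 0 ≤ α k) ∧ (∀ k, α k ≤ 1) ∧
      (Summable fun k => (α k) ^ 2) ∧ (∑' k, (α k) ^ 2) ≤ 1 ∧
      r = |xs x + ∑' k, α k * ys k (y k)|} := by
  refine ⟨‖x‖ + Real.sqrt (∑' k, ‖y k‖ ^ 2), ?_⟩
  rintro r ⟨xs', ys', α', hL, h0, h1, hs, hle, rfl⟩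
  have hxs : |xs' x| ≤ ‖x‖ := by
    have := hL 0 x 0
    simpa [(hN 0).2.2.2.1 x] using this
  have hys : ∀ k (b : Y k), |ys' k b| ≤ ‖b‖ := fun k b => by
    have := hL k 0 b
    simpa [(hN k).2.2.2.2.1 b] using this
  have hbd : ∀ k, |α' k * ys' k (y k)| ≤ α' k * ‖y k‖ := fun k => by
    rw [abs_mul, abs_of_nonneg (h0 k)]
    exact mul_le_mul_of_nonneg_left (hys k _) (h0 k)
  obtain ⟨hsum2, hcs⟩ := tsum_cs' h0 (fun k => norm_nonneg (y k)) hs hy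
  have hsummable : Summable fun k => α' k * ys' k (y k) := by
    refine Summable.of_norm_bounded hsum2 fun k => ?_
    rw [Real.norm_eq_abs]; exact hbd k
  have h2 : |∑' k, α' k * ys' k (y k)| ≤ Real.sqrt (∑' k, ‖y k‖ ^ 2) := by
    have hsumabs : Summable fun k => ‖α' k * ys' k (y k)‖ := by
      refine hsummable.abs.congr fun k => ?_
      rw [Real.norm_eq_abs]
    have habs1 : |∑' k, α' k * ys' k (y k)| ≤ ∑' k, |α' k * ys' k (y k)| := by
      have h := norm_tsum_le_tsum_norm hsumabs
      rw [Real.norm_eq_abs] at h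
      refine h.trans (le_of_eq (tsum_congr fun k => ?_))
      rw [Real.norm_eq_abs]
    have habs2 : ∑' k, |α' k * ys' k (y k)| ≤ ∑' k, α' k * ‖y k‖ :=
      Summable.tsum_le_tsum hbd hsummable.abs hsum2
    have hsq : Real.sqrt (∑' k, α' k ^ 2) ≤ 1 := by
      rw [show (1 : ℝ) = Real.sqrt 1 by simp]
      exact Real.sqrt_le_sqrt hle
    calc |∑' k, α' k * ys' k (y k)| ≤ ∑' k, α' k * ‖y k‖ := le_trans habs1 habs2
      _ ≤ Real.sqrt (∑' k, α' k ^ 2) * Real.sqrt (∑' k, ‖y k‖ ^ 2) := hcs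
      _ ≤ 1 * Real.sqrt (∑' k, ‖y k‖ ^ 2) :=
          mul_le_mul_of_nonneg_right hsq (Real.sqrt_nonneg _)
      _ = Real.sqrt (∑' k, ‖y k‖ ^ 2) := one_mul _
  calc |xs' x + ∑' k, α' k * ys' k (y k)|
      ≤ |xs' x| + |∑' k, α' k * ys' k (y k)| := abs_add_le _ _
    _ ≤ ‖x‖ + Real.sqrt (∑' k, ‖y k‖ ^ 2) := add_le_add hxs h2

lemma key_lemma (hN : ∀ k, IsCompatibleNorm X (Y k) (N k)) (xs : X →L[ℝ] ℝ)
    (g : ∀ k, Y k →L[ℝ] ℝ) (β : ℕ → ℝ) {c : ℝ} (hc : 0 < c)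
    (hgc : ∀ (k : ℕ) (a : X) (b : Y k), |xs a + g k b| ≤ c * N k (a, b))
    (hβ0 : ∀ k, 0 ≤ β k) (hβs : Summable fun k => β k ^ 2) (hβle : ∑' k, β k ^ 2 ≤ 1) :
    sigmaOpNorm N xs (fun k => β k • g k) ≤ c := by
  refine Real.sSup_le ?_ hc.le
  rintro r ⟨x, y, hy, hσ, rfl⟩
  have hβ1 : ∀ k, β k ≤ 1 := fun k => by
    have h1 : β k ^ 2 ≤ 1 :=
      le_trans (Summable.le_tsum hβs k fun j _ => sq_nonneg _) hβle
    nlinarith [hβ0 k]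
  have hmem : c⁻¹ * |xs x + ∑' k, (β k • g k) (y k)| ≤ sigmaNorm N x y := by
    apply le_csSup (sigmaNorm_bddAbove N hN x y hy)
    refine ⟨c⁻¹ • xs, fun k => c⁻¹ • g k, β, ?_, hβ0, hβ1, hβs, hβle, ?_⟩
    · intro k a b
      have h1 := hgc k a b
      have : |(c⁻¹ • xs) a + (c⁻¹ • g k) b| = c⁻¹ * |xs a + g k b| := by
        simp only [ContinuousLinearMap.smul_apply, smul_eq_mul]
        rw [← mul_add, abs_mul, abs_of_nonneg (inv_nonneg.2 hc.le)]
      rw [this]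
      calc c⁻¹ * |xs a + g k b| ≤ c⁻¹ * (c * N k (a, b)) :=
            mul_le_mul_of_nonneg_left h1 (inv_nonneg.2 hc.le)
        _ = N k (a, b) := by field_simp
    · have h1 : ∀ k, β k * (c⁻¹ • g k) (y k) = c⁻¹ * (β k * g k (y k)) := fun k => by
        simp only [ContinuousLinearMap.smul_apply, smul_eq_mul]; ring
      have h2 : ∑' k, β k * (c⁻¹ • g k) (y k) = c⁻¹ * ∑' k, β k * g k (y k) := by
        simp_rw [h1]; exact tsum_mul_left
      rw [h2]
      have h3 : ∀ k, (β k • g k) (y k) = β k * g k (y k) := fun k => by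
        simp [ContinuousLinearMap.smul_apply]
      simp only [ContinuousLinearMap.smul_apply, smul_eq_mul]
      rw [← mul_add, abs_mul, abs_of_nonneg (inv_nonneg.2 hc.le)]
  have hle1 : c⁻¹ * |xs x + ∑' k, (β k • g k) (y k)| ≤ 1 := le_trans hmem hσ
  calc |xs x + ∑' k, (β k • g k) (y k)|
      = c * (c⁻¹ * |xs x + ∑' k, (β k • g k) (y k)|) := by field_simp
    _ ≤ c * 1 := mul_le_mul_of_nonneg_left hle1 hc.le
    _ = c := mul_one c

lemma contra_lemma (hN : ∀ k, IsCompatibleNorm X (Y k) (N k))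
    (xs : X →L[ℝ] ℝ) (ys : ∀ k, Y k →L[ℝ] ℝ) (α : ℕ → ℝ)
    (hnorm1 : sigmaOpNorm N xs (fun k => α k • ys k) = 1)
    (hxlt : ‖xs‖ < 1)
    (g : ∀ k, Y k →L[ℝ] ℝ) (β : ℕ → ℝ)
    (hg : ∀ (k : ℕ) (a : X) (b : Y k), |xs a + g k b| ≤ N k (a, b))
    (hβ0 : ∀ k, 0 ≤ β k) (hβs : Summable fun k => β k ^ 2)
    (hβlt : ∑' k, β k ^ 2 < 1)
    (heq : ∀ k, β k • g k = α k • ys k) : False := by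
  have htn : 0 ≤ ∑' k, β k ^ 2 := tsum_nonneg fun k => sq_nonneg _
  set s := Real.sqrt (∑' k, β k ^ 2) with hsdef
  have hs0 : 0 ≤ s := Real.sqrt_nonneg _
  have hs1 : s < 1 := by
    rw [hsdef, show (1 : ℝ) = Real.sqrt 1 by simp]
    exact Real.sqrt_lt_sqrt htn hβlt
  set u := (s + 1) / 2 with hudef
  have hu0 : 0 < u := by rw [hudef]; linarith
  have hu1 : u < 1 := by rw [hudef]; linarith
  have hsu : s ≤ u := by rw [hudef]; linarith
  set c := u + (1 - u) * ‖xs‖ with hcdef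
  have hc0 : 0 < c := by nlinarith [norm_nonneg xs]
  have hc1 : c < 1 := by nlinarith
  have hkey : sigmaOpNorm N xs (fun k => (β k / u) • (u • g k)) ≤ c := by
    refine key_lemma N hN xs (fun k => u • g k) (fun k => β k / u) hc0 ?_
      (fun k => div_nonneg (hβ0 k) hu0.le) ?_ ?_
    · intro k a b
      have h1 := hg k a b
      have h2 : |xs a| ≤ ‖xs‖ * N k (a, b) := by
        calc |xs a| ≤ ‖xs‖ * ‖a‖ := by
              simpa [Real.norm_eq_abs] using xs.le_opNorm a
          _ ≤ ‖xs‖ * N k (a, b) :=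
              mul_le_mul_of_nonneg_left ((hN k).2.2.2.2.2 a b) (norm_nonneg _)
      have h3 : xs a + (u • g k) b = (1 - u) * xs a + u * (xs a + g k b) := by
        simp only [ContinuousLinearMap.smul_apply, smul_eq_mul]; ring
      rw [h3]
      calc |(1 - u) * xs a + u * (xs a + g k b)|
          ≤ |(1 - u) * xs a| + |u * (xs a + g k b)| := abs_add_le _ _
        _ = (1 - u) * |xs a| + u * |xs a + g k b| := by
            rw [abs_mul, abs_mul, abs_of_nonneg (by linarith : (0:ℝ) ≤ 1 - u),
              abs_of_nonneg hu0.le]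
        _ ≤ (1 - u) * (‖xs‖ * N k (a, b)) + u * N k (a, b) := by
            refine add_le_add (mul_le_mul_of_nonneg_left h2 (by linarith))
              (mul_le_mul_of_nonneg_left h1 hu0.le)
        _ = c * N k (a, b) := by rw [hcdef]; ring
    · exact (hβs.div_const (u ^ 2)).congr fun k => (div_pow (β k) u 2).symm
    · have hpow : ∀ k, (β k / u) ^ 2 = β k ^ 2 * (u ^ 2)⁻¹ := fun k => by
        rw [div_pow, div_eq_mul_inv]
      rw [tsum_congr hpow, tsum_mul_right]
      have hsq : ∑' k, β k ^ 2 = s ^ 2 := (Real.sq_sqrt htn).symm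
      rw [hsq]
      have h4 : s ^ 2 ≤ u ^ 2 := by nlinarith
      have h5 : (0 : ℝ) < u ^ 2 := by positivity
      calc s ^ 2 * (u ^ 2)⁻¹ ≤ u ^ 2 * (u ^ 2)⁻¹ :=
            mul_le_mul_of_nonneg_right h4 (inv_nonneg.2 h5.le)
        _ = 1 := mul_inv_cancel₀ h5.ne'
  have hrepr : (fun k => (β k / u) • (u • g k)) = fun k => α k • ys k := by
    funext k
    rw [smul_smul, div_mul_cancel₀ _ hu0.ne']
    exact heq k
  rw [hrepr, hnorm1] at hkey
  linarith

end Main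

/-- Let `z* = x* + Σ_k α_k y_k* ∈ Λ(X ⊕ Y_k)` with `‖z*‖_Σ = 1` and
`‖x*‖_X < 1`.  Then there is a representation of `z*` of the same form (with the same
`x*`, and with the products `α_k y_k*` unchanged) such that `Σ_k α_k² = 1` and
`‖x* + y_k*‖_{X⊕Y_k} = 1` whenever `α_k > 0`. -/
theorem lambda_representation_normalized
    (X : Type*) [NormedAddCommGroup X] [NormedSpace ℝ X] [CompleteSpace X]
    (Y : ℕ → Type*) [∀ k, NormedAddCommGroup (Y k)] [∀ k, NormedSpace ℝ (Y k)]
    [∀ k, CompleteSpace (Y k)]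
    (N : ∀ k, X × Y k → ℝ) (hN : ∀ k, IsCompatibleNorm X (Y k) (N k))
    (xs : X →L[ℝ] ℝ) (ys : ∀ k, Y k →L[ℝ] ℝ) (α : ℕ → ℝ)
    (hΛ : ∀ (k : ℕ) (a : X) (b : Y k), |xs a + ys k b| ≤ N k (a, b))
    (hα0 : ∀ k, 0 ≤ α k) (hα1 : ∀ k, α k ≤ 1)
    (hαsum : Summable fun k => (α k) ^ 2) (hαle : (∑' k, (α k) ^ 2) ≤ 1)
    (hnorm1 : sigmaOpNorm N xs (fun k => α k • ys k) = 1)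
    (hxlt : ‖xs‖ < 1) :
    ∃ (ys' : ∀ k, Y k →L[ℝ] ℝ) (α' : ℕ → ℝ),
      (∀ (k : ℕ) (a : X) (b : Y k), |xs a + ys' k b| ≤ N k (a, b)) ∧
      (∀ k, 0 ≤ α' k) ∧ (∀ k, α' k ≤ 1) ∧
      (Summable fun k => (α' k) ^ 2) ∧ (∑' k, (α' k) ^ 2) = 1 ∧
      (∀ k, 0 < α' k → pairDualNorm (N k) xs (ys' k) = 1) ∧
      (∀ k, α' k • ys' k = α k • ys k) := by
  have hsum1 : (∑' k, (α k) ^ 2) = 1 := by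
    by_contra hne
    exact contra_lemma N hN xs ys α hnorm1 hxlt ys α hΛ hα0 hαsum
      (lt_of_le_of_ne hαle hne) (fun k => rfl)
  have hpair : ∀ k, 0 < α k → pairDualNorm (N k) xs (ys k) = 1 := by
    intro k0 hk0
    have hle : pairDualNorm (N k0) xs (ys k0) ≤ 1 := pairDual_le_one' (hΛ k0)
    by_contra hne
    set d := pairDualNorm (N k0) xs (ys k0) with hddef
    have hd1 : d < 1 := lt_of_le_of_ne hle hne
    have hdp : ∀ (a : X) (b : Y k0), |xs a + ys k0 b| ≤ d * N k0 (a, b) :=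
      pair_pointwise' (hN k0) (hΛ k0)
    set t : ℝ := max ((d + ‖xs‖) / (1 + ‖xs‖)) (1 / 2) with htdef
    have hden : (0 : ℝ) < 1 + ‖xs‖ := by positivity
    have ht0 : 0 < t := lt_of_lt_of_le (by norm_num) (le_max_right _ _)
    have htlt : t < 1 := by
      refine max_lt ?_ (by norm_num)
      rw [div_lt_one hden]
      linarith
    have htge : d + ‖xs‖ ≤ t * (1 + ‖xs‖) := by
      calc d + ‖xs‖ ≤ ((d + ‖xs‖) / (1 + ‖xs‖)) * (1 + ‖xs‖) := by
            rw [div_mul_cancel₀ _ hden.ne']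
        _ ≤ t * (1 + ‖xs‖) :=
            mul_le_mul_of_nonneg_right (le_max_left _ _) hden.le
    have hti0 : 0 < t⁻¹ := inv_pos.2 ht0
    have htmul : t * t⁻¹ = 1 := mul_inv_cancel₀ ht0.ne'
    have hti1 : 1 ≤ t⁻¹ := by nlinarith
    have hcoef : t⁻¹ * d + (t⁻¹ - 1) * ‖xs‖ ≤ 1 := by
      nlinarith [mul_le_mul_of_nonneg_left htge hti0.le]
    set g : ∀ k, Y k →L[ℝ] ℝ := fun k => if k = k0 then t⁻¹ • ys k else ys k with hgdef
    set β : ℕ → ℝ := fun k => if k = k0 then t * α k else α k with hβdef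
    have hg : ∀ (k : ℕ) (a : X) (b : Y k), |xs a + g k b| ≤ N k (a, b) := by
      intro k a b
      by_cases hk : k = k0
      · subst hk
        simp only [hgdef, if_pos rfl]
        have hm0 : 0 ≤ N k (a, b) := N_nonneg' (hN k) _
        have hxa : |xs a| ≤ ‖xs‖ * N k (a, b) := by
          calc |xs a| ≤ ‖xs‖ * ‖a‖ := by
                simpa [Real.norm_eq_abs] using xs.le_opNorm a
            _ ≤ ‖xs‖ * N k (a, b) :=
                mul_le_mul_of_nonneg_left ((hN k).2.2.2.2.2 a b) (norm_nonneg _)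
        have h1 := hdp a b
        have hrw : xs a + (t⁻¹ • ys k) b
            = t⁻¹ * (xs a + ys k b) - (t⁻¹ - 1) * xs a := by
          simp only [ContinuousLinearMap.smul_apply, smul_eq_mul]
          ring
        rw [hrw]
        calc |t⁻¹ * (xs a + ys k b) - (t⁻¹ - 1) * xs a|
            ≤ |t⁻¹ * (xs a + ys k b)| + |(t⁻¹ - 1) * xs a| := abs_sub _ _
          _ = t⁻¹ * |xs a + ys k b| + (t⁻¹ - 1) * |xs a| := by
              rw [abs_mul, abs_mul, abs_of_nonneg hti0.le,
                abs_of_nonneg (by linarith : (0:ℝ) ≤ t⁻¹ - 1)]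
          _ ≤ t⁻¹ * (d * N k (a, b)) + (t⁻¹ - 1) * (‖xs‖ * N k (a, b)) :=
              add_le_add (mul_le_mul_of_nonneg_left h1 hti0.le)
                (mul_le_mul_of_nonneg_left hxa (by linarith))
          _ = (t⁻¹ * d + (t⁻¹ - 1) * ‖xs‖) * N k (a, b) := by ring
          _ ≤ 1 * N k (a, b) := mul_le_mul_of_nonneg_right hcoef hm0
          _ = N k (a, b) := one_mul _
      · simp only [hgdef, if_neg hk]
        exact hΛ k a b
    have hβ0 : ∀ k, 0 ≤ β k := by
      intro k
      by_cases hk : k = k0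
      · simp only [hβdef, if_pos hk]
        exact mul_nonneg ht0.le (hα0 k)
      · simp only [hβdef, if_neg hk]
        exact hα0 k
    have hsplit : (fun k => β k ^ 2)
        = fun k => α k ^ 2 + (if k = k0 then (t ^ 2 - 1) * α k0 ^ 2 else 0) := by
      funext k
      simp only [hβdef]
      split_ifs with hk
      · subst hk; ring
      · ring
    have hfin : Summable (fun k => if k = k0 then (t ^ 2 - 1) * α k0 ^ 2 else 0) :=
      (hasSum_ite_eq k0 _).summable
    have hβs : Summable fun k => β k ^ 2 := by
      rw [hsplit]; exact hαsum.add hfin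
    have hβlt : ∑' k, β k ^ 2 < 1 := by
      have htsum : ∑' k, β k ^ 2 = (∑' k, α k ^ 2) + (t ^ 2 - 1) * α k0 ^ 2 := by
        rw [hsplit, Summable.tsum_add hαsum hfin, tsum_ite_eq]
      rw [htsum, hsum1]
      have ht2 : t ^ 2 < 1 := by nlinarith
      have hk2 : 0 < α k0 ^ 2 := by positivity
      nlinarith
    have heq : ∀ k, β k • g k = α k • ys k := by
      intro k
      by_cases hk : k = k0
      · subst hk
        simp only [hβdef, hgdef, if_pos rfl]
        rw [smul_smul, mul_comm t (α k), mul_assoc, htmul, mul_one]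
      · simp only [hβdef, hgdef, if_neg hk]
    exact contra_lemma N hN xs ys α hnorm1 hxlt g β hg hβ0 hβs hβlt heq
  exact ⟨ys, α, hΛ, hα0, hα1, hαsum, hsum1, hpair, fun k => rfl⟩
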